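/- Let S = ⟨a_0,…,a_g⟩ be a numerical semigroup that is free for the arrangement (a_0,…,a_g), and assume additionally that n_i·a_i < a_{i+1} for every 1 ≤ i ≤ g−1. Then for every 1 ≤ i ≤ g−1 one has a_{i+1}/e_i ≥ c(S_i) + 1, where S_i = ⟨a_0/e_i,…,a_i/e_i⟩ and c(S_i) = Σ_{j=1}^{i} (n_j − 1)·a_j/e_i − a_0/e_i + 1; equivalently, a_{i+1} + a_0 ≥ Σ_{j=1}^{i} (n_j − 1)·a_j + 2·e_i. -/

import Mathlib

/-- `eSeq a i = gcd(a 0, …, a i)`. -/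
def eSeq (a : ℕ → ℕ) : ℕ → ℕ
  | 0 => a 0
  | i + 1 => Nat.gcd (eSeq a i) (a (i + 1))

/-- `nSeq a i = e_{i-1} / e_i` (intended for `1 ≤ i`). -/
def nSeq (a : ℕ → ℕ) (i : ℕ) : ℕ := eSeq a (i - 1) / eSeq a i

/-- `gen a i = ⟨a 0, …, a i⟩`, the set of all ℕ-linear combinations. -/
def gen (a : ℕ → ℕ) (i : ℕ) : Set ℕ :=
  {s | ∃ c : ℕ → ℕ, s = ∑ j ∈ Finset.range (i + 1), c j * a j}

/-- The semigroup `S = ⟨a 0, …, a g⟩` is free for the arrangement `(a 0, …, a g)`. -/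
def IsFreeArr (a : ℕ → ℕ) (g : ℕ) : Prop :=
  eSeq a g = 1 ∧ ∀ i, 1 ≤ i → i ≤ g → nSeq a i * a i ∈ gen a (i - 1)

/-- The truncated semigroup `S_i = ⟨a 0 / e i, …, a i / e i⟩`. -/
def trunc (a : ℕ → ℕ) (i : ℕ) : Set ℕ :=
  {s | ∃ c : ℕ → ℕ, s = ∑ j ∈ Finset.range (i + 1), c j * (a j / eSeq a i)}

/-- The conductor of a set `T ⊆ ℕ`: the least `c` with `c + ℕ ⊆ T`. -/
noncomputable def conductorOf (T : Set ℕ) : ℕ := sInf {c : ℕ | ∀ m, c ≤ m → m ∈ T}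

/-!
Induction on `i`, using Bézout for `e_{i-1}` and `a_i`, writes every multiple of `e_i` modulo
`a_0` as `∑ c_j a_j` with `0 ≤ c_j < n_j`. Dividing by `e_i`, every integer
`m > ∑ (n_j - 1) a_j / e_i - a_0 / e_i` is such a sum plus a nonnegative multiple of `a_0 / e_i`,
so it lies in `S_i`; this bounds `c(S_i)` by the stated formula. The second inequality follows
by induction from `n_i a_i < a_{i+1}` and `e_i ≤ e_{i-1}`, and together with `e_i ≤ a_{i+1}` it
turns the bound on `c(S_i)` into the first one.
-/

lemma exists_lt_mul_modEq_of_gcd_dvd {e b : ℕ} {m : ℤ} (he : 0 < e)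
    (hm : (Nat.gcd e b : ℤ) ∣ m) :
    ∃ k < e / Nat.gcd e b, (k * b : ℤ) ≡ m [ZMOD e] := by
  set d := Nat.gcd e b
  obtain ⟨t, rfl⟩ := hm
  have hn : (0 : ℤ) < (e / d : ℕ) :=
    Nat.cast_pos.mpr (Nat.div_pos (Nat.gcd_le_left b he) (Nat.gcd_pos_of_pos_left b he))
  have hbezout : t * Nat.gcdB e b * b ≡ d * t [ZMOD e] :=
    Int.modEq_iff_dvd.mpr ⟨t * Nat.gcdA e b, by rw [Nat.gcd_eq_gcd_ab]; ring⟩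
  have hperiod : e ∣ e / d * b := by
    obtain ⟨b', hb'⟩ := Nat.gcd_dvd_right e b
    exact ⟨b', by rw [hb', ← mul_assoc, Nat.div_mul_cancel (Nat.gcd_dvd_left e b)]⟩
  obtain ⟨k, hk⟩ := Int.eq_ofNat_of_zero_le (Int.emod_nonneg (t * Nat.gcdB e b) hn.ne')
  refine ⟨k, by have := Int.emod_lt_of_pos (t * Nat.gcdB e b) hn; omega, ?_⟩
  rw [← hk]
  exact (((Int.mod_modEq _ _).mul_right' (c := b)).of_dvd (by exact_mod_cast hperiod)).trans hbezout

lemma sum_range_succ_eq_add_sum_Icc {M : Type*} [AddCommMonoid M] (f : ℕ → M) (i : ℕ) :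
    ∑ j ∈ Finset.range (i + 1), f j = f 0 + ∑ j ∈ Finset.Icc 1 i, f j := by
  have hrange : Finset.range (i + 1) = insert 0 (Finset.Icc 1 i) := by
    ext j
    simp only [Finset.mem_range, Finset.mem_insert, Finset.mem_Icc]
    omega
  rw [hrange, Finset.sum_insert (by simp)]

section

variable {a : ℕ → ℕ}

lemma eSeq_pos (h0 : 0 < a 0) : ∀ i, 0 < eSeq a i
  | 0 => h0
  | i + 1 => Nat.gcd_pos_of_pos_left _ (eSeq_pos h0 i)

lemma eSeq_succ_dvd (i : ℕ) : eSeq a (i + 1) ∣ eSeq a i := Nat.gcd_dvd_left _ _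

lemma eSeq_dvd : ∀ {i j : ℕ}, j ≤ i → eSeq a i ∣ a j
  | 0, _, hj => by rw [Nat.le_zero.mp hj]; rfl
  | i + 1, j, hj => by
      rcases hj.lt_or_eq with hj | rfl
      · exact (eSeq_succ_dvd i).trans (eSeq_dvd (Nat.lt_succ_iff.mp hj))
      · exact Nat.gcd_dvd_right _ _

lemma eSeq_mul_div_eSeq {i j : ℕ} (hj : j ≤ i) : eSeq a i * (a j / eSeq a i) = a j :=
  Nat.mul_div_cancel' (eSeq_dvd hj)

lemma nSeq_pos (h0 : 0 < a 0) {i : ℕ} (hi : 1 ≤ i) : 0 < nSeq a i := by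
  obtain ⟨i, rfl⟩ := Nat.exists_eq_add_of_le' hi
  exact Nat.div_pos (Nat.le_of_dvd (eSeq_pos h0 i) (eSeq_succ_dvd i)) (eSeq_pos h0 _)

lemma exists_sum_modEq (h0 : 0 < a 0) :
    ∀ (i : ℕ) (m : ℤ), (eSeq a i : ℤ) ∣ m →
      ∃ c : ℕ → ℕ, (∀ j ∈ Finset.Icc 1 i, c j < nSeq a j) ∧
        ((∑ j ∈ Finset.Icc 1 i, c j * a j : ℕ) : ℤ) ≡ m [ZMOD a 0]
  | 0, m, hm =>
      ⟨0, by simp, by simpa using (Int.modEq_zero_iff_dvd.mpr (id hm : (a 0 : ℤ) ∣ m)).symm⟩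
  | i + 1, m, hm => by
      obtain ⟨k, hkn, hk⟩ := exists_lt_mul_modEq_of_gcd_dvd (eSeq_pos h0 i) hm
      obtain ⟨c, hcn, hc⟩ := exists_sum_modEq h0 i (m - k * a (i + 1)) hk.dvd
      refine ⟨Function.update c (i + 1) k, fun j hj => ?_, ?_⟩
      · rcases (Finset.mem_Icc.mp hj).2.lt_or_eq with hji | rfl
        · rw [Function.update_of_ne hji.ne]
          exact hcn j (Finset.mem_Icc.mpr ⟨(Finset.mem_Icc.mp hj).1, Nat.lt_succ_iff.mp hji⟩)
        · rw [Function.update_self]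
          exact hkn
      · rw [Finset.sum_Icc_succ_top (by omega), Function.update_self,
          Finset.sum_congr rfl fun j hj => by
            rw [Function.update_of_ne (by simp at hj; omega)]]
        push_cast
        simpa using hc.add_right (k * a (i + 1) : ℤ)

lemma mem_trunc_of_lt (h0 : 0 < a 0) {i m : ℕ}
    (hm : ∑ j ∈ Finset.Icc 1 i, (nSeq a j - 1) * (a j / eSeq a i) < m + a 0 / eSeq a i) :
    m ∈ trunc a i := by
  set e := eSeq a i
  have he : e ≠ 0 := (eSeq_pos h0 i).ne'
  obtain ⟨c, hcn, hc⟩ :=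
    exists_sum_modEq h0 i (e * m : ℕ) (by exact_mod_cast dvd_mul_right e m)
  set s := ∑ j ∈ Finset.Icc 1 i, c j * (a j / e)
  have hes : ∑ j ∈ Finset.Icc 1 i, c j * a j = e * s := by
    rw [Finset.mul_sum]
    refine Finset.sum_congr rfl fun j hj => ?_
    rw [mul_left_comm, eSeq_mul_div_eSeq (Finset.mem_Icc.mp hj).2]
  have hsm : s ≡ m [MOD a 0 / e] := by
    refine Nat.ModEq.mul_left_cancel' he ?_
    rw [eSeq_mul_div_eSeq (Nat.zero_le i), ← hes]
    exact Int.natCast_modEq_iff.mp hc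
  have hs : s < m + a 0 / e := lt_of_le_of_lt (Finset.sum_le_sum fun j hj =>
    Nat.mul_le_mul_right _ (Nat.le_sub_one_of_lt (hcn j hj))) hm
  have hsm_le : s ≤ m := by
    by_contra! hlt
    have hdvd := (Nat.modEq_iff_dvd' hlt.le).mp hsm.symm
    have := Nat.le_of_dvd (by omega) hdvd
    omega
  obtain ⟨q, hq⟩ := (Nat.modEq_iff_dvd' hsm_le).mp hsm
  refine ⟨Function.update c 0 q, ?_⟩
  change m = ∑ j ∈ Finset.range (i + 1), Function.update c 0 q j * (a j / e)
  rw [sum_range_succ_eq_add_sum_Icc, Function.update_self,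
    Finset.sum_congr rfl fun j hj => by
      rw [Function.update_of_ne (by simp at hj; omega)]]
  rw [mul_comm] at hq
  omega

lemma conductorOf_trunc_le (h0 : 0 < a 0) (i : ℕ) :
    conductorOf (trunc a i) ≤
      ∑ j ∈ Finset.Icc 1 i, (nSeq a j - 1) * (a j / eSeq a i) + 1 - a 0 / eSeq a i :=
  Nat.sInf_le fun _ hm => mem_trunc_of_lt h0 (by omega)

lemma eSeq_mul_conductorOf_trunc_add_one_le (h0 : 0 < a 0) {i b : ℕ} (heb : eSeq a i ≤ b)
    (hb : ∑ j ∈ Finset.Icc 1 i, (nSeq a j - 1) * a j + 2 * eSeq a i ≤ b + a 0) :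
    eSeq a i * (conductorOf (trunc a i) + 1) ≤ b := by
  have hc := conductorOf_trunc_le h0 i
  set e := eSeq a i
  set F := ∑ j ∈ Finset.Icc 1 i, (nSeq a j - 1) * (a j / e)
  have hF : e * F = ∑ j ∈ Finset.Icc 1 i, (nSeq a j - 1) * a j := by
    rw [Finset.mul_sum]
    refine Finset.sum_congr rfl fun j hj => ?_
    rw [mul_left_comm, eSeq_mul_div_eSeq (Finset.mem_Icc.mp hj).2]
  have hA : e * (a 0 / e) = a 0 := eSeq_mul_div_eSeq (Nat.zero_le i)
  rcases Nat.eq_zero_or_pos (conductorOf (trunc a i)) with h | h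
  · simpa [h] using heb
  · have := Nat.mul_le_mul_left e (show conductorOf (trunc a i) + a 0 / e ≤ F + 1 by omega)
    rw [Nat.mul_add, Nat.mul_add, hA, hF] at this
    rw [Nat.mul_add]
    omega

lemma sum_Icc_add_two_mul_eSeq_le (h0 : 0 < a 0) (h1 : 0 < a 1) {i : ℕ} (hi : 1 ≤ i)
    (hgrow : ∀ j, 1 ≤ j → j ≤ i → nSeq a j * a j < a (j + 1)) :
    ∑ j ∈ Finset.Icc 1 i, (nSeq a j - 1) * a j + 2 * eSeq a i ≤ a (i + 1) + a 0 := by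
  induction i, hi using Nat.le_induction with
  | base =>
    have he0 : eSeq a 1 ≤ a 0 := Nat.le_of_dvd h0 (eSeq_dvd (Nat.zero_le 1))
    have he1 : eSeq a 1 ≤ a 1 := Nat.le_of_dvd h1 (eSeq_dvd le_rfl)
    have := hgrow 1 le_rfl le_rfl
    have := Nat.sub_one_mul (nSeq a 1) (a 1)
    have := Nat.le_mul_of_pos_left (a 1) (nSeq_pos h0 le_rfl)
    simp only [Finset.Icc_self, Finset.sum_singleton]
    omega
  | succ i hi ih =>
    have ih := ih fun j hj1 hji => hgrow j hj1 (by omega)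
    have he : eSeq a (i + 1) ≤ eSeq a i :=
      Nat.le_of_dvd (eSeq_pos h0 i) (eSeq_succ_dvd i)
    have := hgrow (i + 1) (by omega) le_rfl
    have := Nat.sub_one_mul (nSeq a (i + 1)) (a (i + 1))
    have := Nat.le_mul_of_pos_left (a (i + 1)) (nSeq_pos h0 (by omega : 1 ≤ i + 1))
    rw [Finset.sum_Icc_succ_top (by omega)]
    omega

end

theorem stmt_10_general (g : ℕ) (a : ℕ → ℕ) (hpos : ∀ i, i ≤ g → 0 < a i)
    (hcond : ∀ i, 1 ≤ i → i ≤ g - 1 → nSeq a i * a i < a (i + 1)) :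
    ∀ i, 1 ≤ i → i ≤ g - 1 →
      a (i + 1) ≥ eSeq a i * (conductorOf (trunc a i) + 1) ∧
      a (i + 1) + a 0 ≥
        (∑ j ∈ Finset.Icc 1 i, (nSeq a j - 1) * a j) + 2 * eSeq a i := by
  intro i hi hig
  have h0 : 0 < a 0 := hpos 0 (Nat.zero_le g)
  have hsum := sum_Icc_add_two_mul_eSeq_le h0 (hpos 1 (by omega)) hi
    fun j hj hji => hcond j hj (hji.trans hig)
  have hei : eSeq a i ≤ a (i + 1) := calc
    eSeq a i ≤ a i := Nat.le_of_dvd (hpos i (by omega)) (eSeq_dvd le_rfl)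
    _ ≤ nSeq a i * a i := Nat.le_mul_of_pos_left _ (nSeq_pos h0 hi)
    _ ≤ a (i + 1) := (hcond i hi hig).le
  exact ⟨eSeq_mul_conductorOf_trunc_add_one_le h0 hei hsum, hsum⟩

theorem stmt_10 (g : ℕ) (a : ℕ → ℕ) (hpos : ∀ i, i ≤ g → 0 < a i)
    (hfree : IsFreeArr a g)
    (hcond : ∀ i, 1 ≤ i → i ≤ g - 1 → nSeq a i * a i < a (i + 1)) :
    ∀ i, 1 ≤ i → i ≤ g - 1 →
      a (i + 1) ≥ eSeq a i * (conductorOf (trunc a i) + 1) ∧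
      a (i + 1) + a 0 ≥
        (∑ j ∈ Finset.Icc 1 i, (nSeq a j - 1) * a j) + 2 * eSeq a i :=
  stmt_10_general g a hpos hcond
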